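/- Cylinder approximation of the rare-event clusters (paper's Lemma 4.5): fix α ∈ (0,2) and 0 < τ″ < τ′. There exists a sequence (ρ_n) of nonnegative reals with ρ_n → 0 such that for all sufficiently large n, 𝔪(Γ_n^+ ∖ Γ_n^−) ≤ ρ_n · 𝔪(U_n(τ′,τ″)^{(1)}). -/

import Mathlib

open Set MeasureTheory Filter
open scoped ENNReal Topology Classical

/-- The setup of Section 2 of the paper: a full-branched Markov linear map `G` on `[0,1]`
with branch domains `I_1,…,I_{k_I}` (mapped affinely onto `[0,1]`) and complementary
intervals `J_j` (mapped affinely onto `(0,1)`), all of length at most `1/2`. -/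
structure CantorData where
  kI : ℕ
  hkI : 1 ≤ kI
  a : ℕ → ℝ
  ha_lt : ∀ i, i + 1 < 2 * kI → a i < a (i + 1)
  ha0 : 0 ≤ a 0
  ha1 : a (2 * kI - 1) ≤ 1
  G : ℝ → ℝ
  hGmaps : Set.MapsTo G (Set.Icc 0 1) (Set.Icc 0 1)
  hGI : ∀ i < kI, ∃ s c : ℝ,
    |s| * (a (2 * i + 1) - a (2 * i)) = 1 ∧
    (∀ x ∈ Set.Icc (a (2 * i)) (a (2 * i + 1)), G x = s * x + c) ∧
    Set.BijOn G (Set.Icc (a (2 * i)) (a (2 * i + 1))) (Set.Icc 0 1)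
  hGJmid : ∀ i, i + 1 < kI → ∃ s c : ℝ,
    |s| * (a (2 * i + 2) - a (2 * i + 1)) = 1 ∧
    (∀ x ∈ Set.Ioo (a (2 * i + 1)) (a (2 * i + 2)), G x = s * x + c) ∧
    Set.SurjOn G (Set.Ioo (a (2 * i + 1)) (a (2 * i + 2))) (Set.Ioo 0 1)
  hGJleft : 0 < a 0 → ∃ s c : ℝ,
    |s| * a 0 = 1 ∧
    (∀ x ∈ Set.Ico 0 (a 0), G x = s * x + c) ∧
    Set.SurjOn G (Set.Ico 0 (a 0)) (Set.Ioo 0 1)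
  hGJright : a (2 * kI - 1) < 1 → ∃ s c : ℝ,
    |s| * (1 - a (2 * kI - 1)) = 1 ∧
    (∀ x ∈ Set.Ioc (a (2 * kI - 1)) 1, G x = s * x + c) ∧
    Set.SurjOn G (Set.Ioc (a (2 * kI - 1)) 1) (Set.Ioo 0 1)
  hIlen : ∀ i < kI, a (2 * i + 1) - a (2 * i) ≤ 1 / 2
  hJlenL : a 0 ≤ 1 / 2
  hJlenR : 1 - a (2 * kI - 1) ≤ 1 / 2
  hJlenM : ∀ i, i + 1 < kI → a (2 * i + 2) - a (2 * i + 1) ≤ 1 / 2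
  hkJ : (Set.Icc (0:ℝ) 1 \ ⋃ i ∈ Finset.range kI,
      Set.Icc (a (2 * i)) (a (2 * i + 1))).Nonempty

namespace CantorData

variable (S : CantorData)

/-- The union `⋃_i I_i` of the branch domains forming the Cantor construction. -/
def IU : Set ℝ := ⋃ i ∈ Finset.range S.kI, Set.Icc (S.a (2 * i)) (S.a (2 * i + 1))

/-- `Λ_n = {x ∈ [0,1] : G^{i-1}(x) ∈ ⋃ I for all 1 ≤ i ≤ n}`. -/
def Lam (n : ℕ) : Set ℝ := {x ∈ Set.Icc (0:ℝ) 1 | ∀ i < n, S.G^[i] x ∈ S.IU}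

/-- The dynamically defined Cantor set `Λ = ⋂_n Λ_n`. -/
def Cantor : Set ℝ := ⋂ n : ℕ, S.Lam n

/-- `λ = |⋃ I_i| = Σ_i 1/m_i`. -/
noncomputable def lam : ℝ := ∑ i ∈ Finset.range S.kI, (S.a (2 * i + 1) - S.a (2 * i))

/-- `𝔪`, Lebesgue measure on `[0,1]`. -/
noncomputable def mes (_S : CantorData) : Measure ℝ := volume.restrict (Set.Icc 0 1)

/-- `ψ(x) = Σ_{i ∈ 𝓘_x} 2^{-i}` where `𝓘_x = {i ≥ 1 : G^{i-1}(x) ∉ ⋃ I}`. -/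
noncomputable def psi (x : ℝ) : ℝ :=
  ∑' i : ℕ, if S.G^[i] x ∈ S.IU then 0 else (2:ℝ)⁻¹ ^ (i + 1)

/-- `F(t) = 𝔪{x : ψ(x) ≤ t}`, the distribution function of `ψ`. -/
noncomputable def F (t : ℝ) : ℝ := (S.mes {x | S.psi x ≤ t}).toReal

/-- `φ_α = (F ∘ ψ)^{-1/α}`, with value `∞` where `F ∘ ψ` vanishes. -/
noncomputable def phi (α : ℝ) (x : ℝ) : ℝ≥0∞ :=
  ENNReal.ofReal (S.F (S.psi x)) ^ (-(1 / α))

/-- `X_n = φ_α ∘ G^n`. -/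
noncomputable def X (α : ℝ) (n : ℕ) (x : ℝ) : ℝ≥0∞ := S.phi α (S.G^[n] x)

/-- `P_n`: the points following the Cantor construction exactly `n` steps and
never entering `⋃ I` afterwards. -/
def Pset (n : ℕ) : Set ℝ :=
  {x ∈ Set.Icc (0:ℝ) 1 | (∀ i < n, S.G^[i] x ∈ S.IU) ∧ ∀ i, n ≤ i → S.G^[i] x ∉ S.IU}

/-- The family of partition intervals `(I,J)_1,…,(I,J)_{k_I+k_J}`. -/
def PieceFamily : Set (Set ℝ) :=
  ((fun i => Set.Icc (S.a (2 * i)) (S.a (2 * i + 1))) '' Set.Iio S.kI) ∪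
  ((fun i => Set.Ioo (S.a (2 * i + 1)) (S.a (2 * i + 2))) '' {i | i + 1 < S.kI}) ∪
  {Set.Ico (0:ℝ) (S.a 0), Set.Ioc (S.a (2 * S.kI - 1)) 1}

/-- The depth-`d` cylinder `C_w = ⋂_{k=1}^d G^{-(k-1)}((I,J)_{w_k})`. -/
def Cyl (d : ℕ) (w : ℕ → Set ℝ) : Set ℝ := ⋂ k ∈ Finset.range d, (S.G^[k]) ⁻¹' (w k)

/-- `C` is a depth-`d` cylinder. -/
def IsCylinder (d : ℕ) (C : Set ℝ) : Prop :=
  ∃ w : ℕ → Set ℝ, (∀ k < d, w k ∈ S.PieceFamily) ∧ C = S.Cyl d w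

/-- `Υ⁺(A,d)`: union of the depth-`d` cylinders meeting `A`. -/
def upApprox (A : Set ℝ) (d : ℕ) : Set ℝ :=
  ⋃₀ {C | S.IsCylinder d C ∧ (C ∩ A).Nonempty}

/-- `Υ⁻(A,d)`: union of the depth-`d` cylinders contained in `A`. -/
def lowApprox (A : Set ℝ) (d : ℕ) : Set ℝ :=
  ⋃₀ {C | S.IsCylinder d C ∧ C ⊆ A}

/-- `u_n(τ) = (n/τ)^{1/α}`. -/
noncomputable def un (_S : CantorData) (α τ : ℝ) (n : ℕ) : ℝ := ((n : ℝ) / τ) ^ (1 / α)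

/-- `U_n(τ) = {X_0 > u_n(τ)}`. -/
noncomputable def Un (α τ : ℝ) (n : ℕ) : Set ℝ :=
  {x ∈ Set.Icc (0:ℝ) 1 | ENNReal.ofReal (S.un α τ n) < S.X α 0 x}

/-- `U_n^{(1)}(τ) = U_n(τ) ∩ G^{-1}([0,1] ∖ U_n(τ))`. -/
noncomputable def Un1 (α τ : ℝ) (n : ℕ) : Set ℝ :=
  S.Un α τ n ∩ S.G ⁻¹' (Set.Icc 0 1 \ S.Un α τ n)

/-- `U_n(τ',τ'') = U_n(τ') ∖ U_n(τ'')`. -/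
noncomputable def UnPair (α τ' τ'' : ℝ) (n : ℕ) : Set ℝ := S.Un α τ' n \ S.Un α τ'' n

/-- `U_n(τ',τ'')^{(1)}`. -/
noncomputable def UnPair1 (α τ' τ'' : ℝ) (n : ℕ) : Set ℝ :=
  S.UnPair α τ' τ'' n ∩ S.G ⁻¹' (Set.Icc 0 1 \ S.UnPair α τ' τ'' n)

/-- `j_{n,τ}`: the least `j` with `λ^j ≤ τ/n`. -/
noncomputable def jn (τ : ℝ) (n : ℕ) : ℕ := sInf {j : ℕ | S.lam ^ j ≤ τ / n}

/-- `Γ_n^+`: outer approximation of `U_n(τ',τ'')^{(1)}` by depth-`2 j_{n,τ'}` cylinders. -/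
noncomputable def GammaPlus (α τ' τ'' : ℝ) (n : ℕ) : Set ℝ :=
  S.upApprox (S.UnPair1 α τ' τ'' n) (2 * S.jn τ' n)

/-- `Γ_n^-`: inner approximation of `U_n(τ',τ'')^{(1)}` by depth-`2 j_{n,τ'}` cylinders. -/
noncomputable def GammaMinus (α τ' τ'' : ℝ) (n : ℕ) : Set ℝ :=
  S.lowApprox (S.UnPair1 α τ' τ'' n) (2 * S.jn τ' n)

end CantorData

/-!
The coding map `ψ` records in binary the times at which an orbit is outside `⋃ I`, so
`ψ = ψ ∘ G / 2` on `⋃ I` and `ψ = (1 + ψ ∘ G) / 2` off it, while `G` pulls Lebesgue measure back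
with factor `λ` on `⋃ I` and at most `1 - λ` off it. Hence the law of `ψ` is self-similar: an
interval of length `2⁻ᵈ` inside `[0, 2⁻ᵐ]` has mass at most `2 λᵐ θ^(d-m)`, `θ = max λ (1 - λ)`.
Consequently `F` is continuous with `F (t / 2) = λ F t`, `F ∘ ψ` is uniform on `[0, 1]`, and
`U_n(τ',τ'')^{(1)} = {β/n ≤ F ∘ ψ < τ'/n}` with `β = max τ'' (λ τ')` has measure `(τ' - β)/n`,
comparable to `λʲ` for `j = j_{n,τ'}`. On a depth-`2j` cylinder meeting this set the first `j - 1`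
symbols lie in `⋃ I`, so `F ∘ ψ` oscillates there by at most `2 λ^(j-1) θ^(j+1)`. A cylinder
counted in `Γ⁺ ∖ Γ⁻` meets the set without lying inside it, so it lies in a window of that
half-width around `β/n` or `τ'/n`, and `𝔪(Γ⁺ ∖ Γ⁻) = O(θʲ) 𝔪(U^{(1)})`.
-/

lemma two_inv_pow_succ_le (d : ℕ) : (2⁻¹ : ℝ) ^ (d + 1) ≤ 2⁻¹ :=
  pow_le_of_le_one (by norm_num) (by norm_num) d.succ_ne_zero

lemma summable_two_inv_pow_succ : Summable fun i : ℕ => (2⁻¹ : ℝ) ^ (i + 1) := by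
  simp_rw [pow_succ]
  exact (summable_geometric_of_lt_one (by norm_num) (by norm_num)).mul_right _

lemma tsum_two_inv_pow_succ : ∑' i : ℕ, (2⁻¹ : ℝ) ^ (i + 1) = 1 := by
  simp_rw [pow_succ]
  rw [tsum_mul_right, tsum_geometric_inv_two]
  norm_num

lemma volume_preimage_affine {s : ℝ} (hs : s ≠ 0) (c : ℝ) (B : Set ℝ) :
    volume ((fun x => s * x + c) ⁻¹' B) = ENNReal.ofReal |s|⁻¹ * volume B := by
  rw [show (fun x => s * x + c) ⁻¹' B = (s * ·) ⁻¹' ((· + c) ⁻¹' B) from rfl,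
    Real.volume_preimage_mul_left hs, measure_preimage_add_right, abs_inv]

lemma ofReal_rpow_lt_ofReal_rpow_neg_iff {p q c : ℝ} (hp : 0 < p) (hq : 0 < q) (hc : 0 ≤ c) :
    ENNReal.ofReal (q ^ p) < ENNReal.ofReal c ^ (-p) ↔ c < q⁻¹ := by
  rcases hc.eq_or_lt with rfl | hc
  · simp [ENNReal.zero_rpow_of_neg (neg_neg_of_pos hp), hq]
  rw [ENNReal.ofReal_rpow_of_pos hc, ENNReal.ofReal_lt_ofReal_iff (Real.rpow_pos_of_pos hc _),
    Real.rpow_neg hc.le, ← Real.inv_rpow hc.le,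
    Real.rpow_lt_rpow_iff hq.le (inv_nonneg.mpr hc.le) hp,
    lt_inv_comm₀ hq hc]

lemma subset_preimage_Ico_union_of_abs_sub_le {X : Type*} {f : X → ℝ} {K C : Set X} {a b M : ℝ}
    (hCK : C ⊆ K) (hmeet : (C ∩ {z ∈ K | f z ∈ Ico a b}).Nonempty)
    (hnot : ¬ C ⊆ {z ∈ K | f z ∈ Ico a b}) (hosc : ∀ z ∈ C, ∀ z' ∈ C, |f z - f z'| ≤ M) :
    C ⊆ f ⁻¹' Ico (a - M) (a + M) ∪ f ⁻¹' Ico (b - M) (b + M) := by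
  obtain ⟨x, hxC, -, hxa, hxb⟩ := hmeet
  obtain ⟨x', hx'C, hx'⟩ := not_subset.mp hnot
  have hx'ab : f x' < a ∨ b ≤ f x' := by
    by_contra h
    rw [not_or, not_lt, not_le] at h
    exact hx' ⟨hCK hx'C, h.1, h.2⟩
  intro z hz
  have hzx := abs_le.mp (hosc z hz x hxC)
  have hzx' := abs_le.mp (hosc z hz x' hx'C)
  rcases hx'ab with h | h
  · exact Or.inl ⟨by linarith, by linarith⟩
  · exact Or.inr ⟨by linarith, by linarith⟩

namespace CantorData

variable (S : CantorData)

instance : IsProbabilityMeasure S.mes :=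
  ⟨by rw [mes, Measure.restrict_apply_univ, Real.volume_Icc]; norm_num⟩

lemma mes_apply (A : Set ℝ) : S.mes A = volume (A ∩ Icc 0 1) :=
  Measure.restrict_apply' measurableSet_Icc

lemma mes_of_subset_Icc {A : Set ℝ} (hA : A ⊆ Icc 0 1) : S.mes A = volume A := by
  rw [mes_apply, inter_eq_left.mpr hA]

/-! ### The partition of `[0,1]` -/

lemma a_strictMonoOn : StrictMonoOn S.a (Iic (2 * S.kI - 1)) :=
  strictMonoOn_Iic_of_lt_succ fun i hi => S.ha_lt i (by have := S.hkI; omega)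

lemma a_lt_a {i j : ℕ} (hij : i < j) (hj : j < 2 * S.kI) : S.a i < S.a j :=
  S.a_strictMonoOn (by simp only [mem_Iic]; omega) (by simp only [mem_Iic]; omega) hij

lemma a_le_a {i j : ℕ} (hij : i ≤ j) (hj : j < 2 * S.kI) : S.a i ≤ S.a j :=
  hij.eq_or_lt.elim (fun h => h ▸ le_rfl) fun h => (S.a_lt_a h hj).le

lemma a_mem_Icc {i : ℕ} (hi : i < 2 * S.kI) : S.a i ∈ Icc (0 : ℝ) 1 :=
  ⟨S.ha0.trans (S.a_le_a (Nat.zero_le i) hi),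
    (S.a_le_a (by omega : i ≤ 2 * S.kI - 1) (by have := S.hkI; omega)).trans S.ha1⟩

-- `I i` is the paper's `I_{i+1}`; the gaps `J_j` are `Jleft`, `Jmid i` and `Jright`, where the
-- two end gaps may be empty.
def I (i : ℕ) : Set ℝ := Icc (S.a (2 * i)) (S.a (2 * i + 1))

def Jmid (i : ℕ) : Set ℝ := Ioo (S.a (2 * i + 1)) (S.a (2 * i + 2))

def Jleft : Set ℝ := Ico 0 (S.a 0)

def Jright : Set ℝ := Ioc (S.a (2 * S.kI - 1)) 1

lemma I_subset_Icc {i : ℕ} (hi : i < S.kI) : S.I i ⊆ Icc 0 1 :=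
  Icc_subset_Icc (S.a_mem_Icc (by omega)).1 (S.a_mem_Icc (by omega)).2

lemma Jmid_subset_Icc {i : ℕ} (hi : i + 1 < S.kI) : S.Jmid i ⊆ Icc 0 1 :=
  Ioo_subset_Icc_self.trans (Icc_subset_Icc (S.a_mem_Icc (by omega)).1 (S.a_mem_Icc (by omega)).2)

lemma Jleft_subset_Icc : S.Jleft ⊆ Icc 0 1 :=
  Ico_subset_Icc_self.trans (Icc_subset_Icc le_rfl (S.a_mem_Icc (by have := S.hkI; omega)).2)

lemma Jright_subset_Icc : S.Jright ⊆ Icc 0 1 :=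
  Ioc_subset_Icc_self.trans (Icc_subset_Icc (S.a_mem_Icc (by have := S.hkI; omega)).1 le_rfl)

lemma mem_IU_iff {x : ℝ} : x ∈ S.IU ↔ ∃ i < S.kI, x ∈ S.I i := by
  simp only [IU, I, Finset.mem_range, mem_iUnion, exists_prop]

lemma IU_subset_Icc : S.IU ⊆ Icc 0 1 := fun _ hx =>
  let ⟨_, hi, hx⟩ := S.mem_IU_iff.mp hx
  S.I_subset_Icc hi hx

lemma measurableSet_IU : MeasurableSet S.IU :=
  Finset.measurableSet_biUnion _ fun _ _ => measurableSet_Icc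

lemma pairwiseDisjoint_I : (Finset.range S.kI : Set ℕ).PairwiseDisjoint S.I := by
  intro i hi i' hi' hne
  simp only [Finset.coe_range, mem_Iio] at hi hi'
  rw [Function.onFun, Set.disjoint_left]
  rintro x ⟨hx1, hx2⟩ ⟨hx1', hx2'⟩
  rcases hne.lt_or_gt with h | h
  · linarith [S.a_lt_a (by omega : 2 * i + 1 < 2 * i') (by omega)]
  · linarith [S.a_lt_a (by omega : 2 * i' + 1 < 2 * i) (by omega)]

lemma disjoint_Jmid_IU {i : ℕ} (hi : i + 1 < S.kI) : Disjoint (S.Jmid i) S.IU := by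
  rw [Set.disjoint_left]
  rintro x ⟨hx1, hx2⟩ hx
  obtain ⟨k, hk, hxk1, hxk2⟩ := S.mem_IU_iff.mp hx
  rcases le_or_gt k i with h | h
  · linarith [S.a_le_a (by omega : 2 * k + 1 ≤ 2 * i + 1) (by omega)]
  · linarith [S.a_le_a (by omega : 2 * i + 2 ≤ 2 * k) (by omega)]

lemma disjoint_Jleft_IU : Disjoint S.Jleft S.IU := by
  rw [Set.disjoint_left]
  rintro x ⟨-, hx⟩ hx'
  obtain ⟨k, hk, hxk, -⟩ := S.mem_IU_iff.mp hx'
  linarith [S.a_le_a (Nat.zero_le (2 * k)) (by omega)]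

lemma disjoint_Jright_IU : Disjoint S.Jright S.IU := by
  rw [Set.disjoint_left]
  rintro x ⟨hx, -⟩ hx'
  obtain ⟨k, hk, -, hxk⟩ := S.mem_IU_iff.mp hx'
  linarith [S.a_le_a (by omega : 2 * k + 1 ≤ 2 * S.kI - 1) (by omega)]

lemma mem_IU_or_Jmid {x : ℝ} (h0 : S.a 0 ≤ x) {m : ℕ} (hm : m < 2 * S.kI) (hx : x ≤ S.a m) :
    x ∈ S.IU ∨ ∃ i, i + 1 < S.kI ∧ x ∈ S.Jmid i := by
  induction m with
  | zero =>
    exact Or.inl (S.mem_IU_iff.mpr ⟨0, by omega, h0, hx.trans (S.a_le_a (by omega) (by omega))⟩)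
  | succ m ih =>
    rcases le_or_gt x (S.a m) with h | h
    · exact ih (by omega) h
    obtain ⟨i, rfl | rfl⟩ := Nat.even_or_odd' m
    · exact Or.inl (S.mem_IU_iff.mpr ⟨i, by omega, h.le, hx⟩)
    rcases hx.lt_or_eq with hx | rfl
    · exact Or.inr ⟨i, by omega, h, hx⟩
    · exact Or.inl (S.mem_IU_iff.mpr ⟨i + 1, by omega, le_rfl, S.a_le_a (by omega) (by omega)⟩)

lemma mem_IU_or_gap {x : ℝ} (hx : x ∈ Icc (0 : ℝ) 1) :
    x ∈ S.IU ∨ x ∈ S.Jleft ∨ x ∈ S.Jright ∨ ∃ i, i + 1 < S.kI ∧ x ∈ S.Jmid i := by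
  rcases lt_or_ge x (S.a 0) with h0 | h0
  · exact Or.inr (Or.inl ⟨hx.1, h0⟩)
  rcases lt_or_ge (S.a (2 * S.kI - 1)) x with h1 | h1
  · exact Or.inr (Or.inr (Or.inl ⟨h1, hx.2⟩))
  rcases S.mem_IU_or_Jmid h0 (by have := S.hkI; omega : 2 * S.kI - 1 < 2 * S.kI) h1 with h | h
  · exact Or.inl h
  · exact Or.inr (Or.inr (Or.inr h))

lemma lam_eq_sum : S.lam = ∑ i ∈ Finset.range S.kI, (S.a (2 * i + 1) - S.a (2 * i)) := rfl

lemma lam_pos : 0 < S.lam :=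
  Finset.sum_pos (fun i hi => sub_pos.mpr (S.a_lt_a (by omega)
    (by have := Finset.mem_range.mp hi; omega))) ⟨0, Finset.mem_range.mpr S.hkI⟩

lemma lam_add_gaps : S.lam + (S.a 0 + (1 - S.a (2 * S.kI - 1)) +
    ∑ i ∈ Finset.range (S.kI - 1), (S.a (2 * i + 2) - S.a (2 * i + 1))) = 1 := by
  obtain ⟨K, hK⟩ : ∃ K, S.kI = K + 1 := ⟨S.kI - 1, by have := S.hkI; omega⟩
  have htel := Finset.sum_range_sub (fun i => S.a (2 * i)) K
  rw [lam_eq_sum, hK, Finset.sum_range_succ, show K + 1 - 1 = K by omega,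
    show 2 * (K + 1) - 1 = 2 * K + 1 by omega]
  have hsplit : ∑ i ∈ Finset.range K, (S.a (2 * (i + 1)) - S.a (2 * i)) =
      ∑ i ∈ Finset.range K, (S.a (2 * i + 1) - S.a (2 * i)) +
        ∑ i ∈ Finset.range K, (S.a (2 * i + 2) - S.a (2 * i + 1)) := by
    rw [← Finset.sum_add_distrib]
    exact Finset.sum_congr rfl fun i _ => by ring_nf
  linarith

lemma lam_lt_one : S.lam < 1 := by
  obtain ⟨z, hz, hzIU⟩ := S.hkJ
  have hmid : ∀ i ∈ Finset.range (S.kI - 1), 0 ≤ S.a (2 * i + 2) - S.a (2 * i + 1) := fun i hi =>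
    sub_nonneg.mpr (S.a_le_a (by omega) (by have := Finset.mem_range.mp hi; omega))
  have hsum := Finset.sum_nonneg hmid
  have := S.lam_add_gaps
  have := S.ha0
  have := S.ha1
  rcases S.mem_IU_or_gap hz with h | h | h | ⟨i, hi, h⟩
  · exact absurd h hzIU
  · linarith [h.1.trans_lt h.2]
  · linarith [h.1.trans_le h.2]
  · linarith [h.1.trans h.2,
      Finset.single_le_sum hmid (Finset.mem_range.mpr (by omega : i < S.kI - 1))]

lemma pieceFamily_finite : S.PieceFamily.Finite :=
  (((finite_Iio _).image _).union (((finite_Iio S.kI).subset fun i (hi : i + 1 < S.kI) =>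
    show i < S.kI by omega).image _)).union (toFinite _)

lemma Icc_subset_sUnion_pieceFamily : Icc 0 1 ⊆ ⋃₀ S.PieceFamily := by
  intro x hx
  rcases S.mem_IU_or_gap hx with h | h | h | ⟨i, hi, h⟩
  · obtain ⟨i, hi, h⟩ := S.mem_IU_iff.mp h
    exact ⟨_, Or.inl (Or.inl ⟨i, hi, rfl⟩), h⟩
  · exact ⟨_, Or.inr (Or.inl rfl), h⟩
  · exact ⟨_, Or.inr (Or.inr rfl), h⟩
  · exact ⟨_, Or.inl (Or.inr ⟨i, hi, rfl⟩), h⟩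

lemma subset_Icc_of_mem_pieceFamily {P : Set ℝ} (hP : P ∈ S.PieceFamily) : P ⊆ Icc 0 1 := by
  rcases hP with (⟨i, hi, rfl⟩ | ⟨i, hi, rfl⟩) | rfl | rfl
  exacts [S.I_subset_Icc hi, S.Jmid_subset_Icc hi, S.Jleft_subset_Icc, S.Jright_subset_Icc]

lemma subset_IU_or_disjoint_of_mem_pieceFamily {P : Set ℝ} (hP : P ∈ S.PieceFamily) :
    P ⊆ S.IU ∨ Disjoint P S.IU := by
  rcases hP with (⟨i, hi, rfl⟩ | ⟨i, hi, rfl⟩) | rfl | rfl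
  · exact Or.inl fun x hx => S.mem_IU_iff.mpr ⟨i, hi, hx⟩
  exacts [Or.inr (S.disjoint_Jmid_IU hi), Or.inr S.disjoint_Jleft_IU, Or.inr S.disjoint_Jright_IU]

lemma measurableSet_of_mem_pieceFamily {P : Set ℝ} (hP : P ∈ S.PieceFamily) : MeasurableSet P := by
  rcases hP with (⟨i, hi, rfl⟩ | ⟨i, hi, rfl⟩) | rfl | rfl
  exacts [measurableSet_Icc, measurableSet_Ioo, measurableSet_Ico, measurableSet_Ioc]

/-! ### The branches of `G` -/

-- Vacuous for empty `P`, as an empty end gap carries no branch of `G`.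
def IsAffinePiece (P : Set ℝ) (L : ℝ) : Prop :=
  P.Nonempty → ∃ s c : ℝ, |s| * L = 1 ∧ EqOn S.G (fun x => s * x + c) P

lemma isAffinePiece_I {i : ℕ} (hi : i < S.kI) :
    S.IsAffinePiece (S.I i) (S.a (2 * i + 1) - S.a (2 * i)) := fun _ =>
  let ⟨s, c, hs, hG, _⟩ := S.hGI i hi
  ⟨s, c, hs, fun x hx => hG x hx⟩

lemma isAffinePiece_Jmid {i : ℕ} (hi : i + 1 < S.kI) :
    S.IsAffinePiece (S.Jmid i) (S.a (2 * i + 2) - S.a (2 * i + 1)) := fun _ =>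
  let ⟨s, c, hs, hG, _⟩ := S.hGJmid i hi
  ⟨s, c, hs, fun x hx => hG x hx⟩

lemma isAffinePiece_Jleft : S.IsAffinePiece S.Jleft (S.a 0) := fun ⟨_, hx⟩ =>
  let ⟨s, c, hs, hG, _⟩ := S.hGJleft (hx.1.trans_lt hx.2)
  ⟨s, c, hs, fun x hx => hG x hx⟩

lemma isAffinePiece_Jright : S.IsAffinePiece S.Jright (1 - S.a (2 * S.kI - 1)) := fun ⟨_, hx⟩ =>
  let ⟨s, c, hs, hG, _⟩ := S.hGJright (hx.1.trans_le hx.2)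
  ⟨s, c, hs, fun x hx => hG x hx⟩

lemma exists_isAffinePiece_of_mem_pieceFamily {P : Set ℝ} (hP : P ∈ S.PieceFamily) :
    ∃ L, S.IsAffinePiece P L := by
  rcases hP with (⟨i, hi, rfl⟩ | ⟨i, hi, rfl⟩) | rfl | rfl
  exacts [⟨_, S.isAffinePiece_I hi⟩, ⟨_, S.isAffinePiece_Jmid hi⟩, ⟨_, S.isAffinePiece_Jleft⟩,
    ⟨_, S.isAffinePiece_Jright⟩]

lemma volume_inter_preimage_le {P : Set ℝ} {L : ℝ} (h : S.IsAffinePiece P L)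
    (hP : P ⊆ Icc 0 1) (B : Set ℝ) : volume (P ∩ S.G ⁻¹' B) ≤ ENNReal.ofReal L * S.mes B := by
  rcases P.eq_empty_or_nonempty with rfl | hne
  · simp
  obtain ⟨s, c, hs, hG⟩ := h hne
  have hs0 : s ≠ 0 := by rintro rfl; simp at hs
  calc volume (P ∩ S.G ⁻¹' B) = volume (P ∩ S.G ⁻¹' (B ∩ Icc 0 1)) := by
        congr 1; ext x
        exact and_congr_right fun hx => ⟨fun h => ⟨h, S.hGmaps (hP hx)⟩, fun h => h.1⟩
    _ ≤ volume ((fun x => s * x + c) ⁻¹' (B ∩ Icc 0 1)) := by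
        rw [hG.inter_preimage_eq]; exact measure_mono inter_subset_right
    _ = ENNReal.ofReal L * S.mes B := by
        rw [volume_preimage_affine hs0, mes_apply, ← eq_inv_of_mul_eq_one_right hs]

lemma measurableSet_inter_preimage {P B : Set ℝ} {L : ℝ} (h : S.IsAffinePiece P L)
    (hP : MeasurableSet P) (hB : MeasurableSet B) : MeasurableSet (P ∩ S.G ⁻¹' B) := by
  rcases P.eq_empty_or_nonempty with rfl | hne
  · simp
  obtain ⟨s, c, -, hG⟩ := h hne
  rw [hG.inter_preimage_eq]
  exact hP.inter (hB.preimage (by fun_prop))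

lemma volume_I_inter_preimage {i : ℕ} (hi : i < S.kI) (B : Set ℝ) :
    volume (S.I i ∩ S.G ⁻¹' B) = ENNReal.ofReal (S.a (2 * i + 1) - S.a (2 * i)) * S.mes B := by
  obtain ⟨s, c, hs, hG, hbij⟩ := S.hGI i hi
  have hs0 : s ≠ 0 := by rintro rfl; simp at hs
  have hset : S.I i ∩ S.G ⁻¹' B = (fun x => s * x + c) ⁻¹' (B ∩ Icc 0 1) := by
    ext x
    refine ⟨fun ⟨hx, hGx⟩ => ?_, fun hx => ?_⟩
    · rw [mem_preimage, ← hG x hx]; exact ⟨hGx, hbij.mapsTo hx⟩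
    · obtain ⟨y, hy, hGy⟩ := hbij.surjOn hx.2
      obtain rfl : y = x := by
        rw [hG y hy] at hGy; exact mul_left_cancel₀ hs0 (add_right_cancel hGy)
      exact ⟨hy, by rw [mem_preimage, hG y hy]; exact hx.1⟩
  rw [hset, volume_preimage_affine hs0, mes_apply, ← eq_inv_of_mul_eq_one_right hs]

lemma measureReal_inter_Icc (A : Set ℝ) : S.mes.real (A ∩ Icc 0 1) = S.mes.real A := by
  rw [measureReal_def, measureReal_def, mes_apply, mes_apply, inter_assoc, inter_self]

lemma measureReal_inter_preimage_le {P : Set ℝ} {L : ℝ} (h : S.IsAffinePiece P L)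
    (hP : P ⊆ Icc 0 1) (hL : 0 ≤ L) (B : Set ℝ) :
    S.mes.real (P ∩ S.G ⁻¹' B) ≤ L * S.mes.real B := by
  rw [measureReal_def, mes_of_subset_Icc _ (inter_subset_left.trans hP), measureReal_def,
    ← ENNReal.toReal_ofReal hL, ← ENNReal.toReal_mul]
  exact ENNReal.toReal_mono (by finiteness) (S.volume_inter_preimage_le h hP B)

lemma volume_inter_IU (T : Set ℝ) :
    volume (T ∩ S.IU) = ∑ i ∈ Finset.range S.kI, volume (T ∩ S.I i) := by
  rw [← Measure.restrict_apply' S.measurableSet_IU,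
    show S.IU = ⋃ i ∈ Finset.range S.kI, S.I i from rfl,
    Measure.restrict_biUnion_finset S.pairwiseDisjoint_I fun _ => measurableSet_Icc,
    Measure.sum_apply_of_countable, ← Finset.tsum_subtype]
  exact tsum_congr fun i => Measure.restrict_apply' measurableSet_Icc

lemma measureReal_IU_inter_preimage (B : Set ℝ) :
    S.mes.real (S.IU ∩ S.G ⁻¹' B) = S.lam * S.mes.real B := by
  have hvol : volume (S.IU ∩ S.G ⁻¹' B) = ENNReal.ofReal S.lam * S.mes B := by
    rw [inter_comm, volume_inter_IU, lam_eq_sum, ENNReal.ofReal_sum_of_nonneg fun i hi =>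
      sub_nonneg.mpr (S.a_le_a (by omega) (by have := Finset.mem_range.mp hi; omega)),
      Finset.sum_mul]
    exact Finset.sum_congr rfl fun i hi => by
      rw [inter_comm, S.volume_I_inter_preimage (Finset.mem_range.mp hi)]
  rw [measureReal_def, mes_of_subset_Icc _ (inter_subset_left.trans S.IU_subset_Icc), hvol,
    ENNReal.toReal_mul, ENNReal.toReal_ofReal S.lam_pos.le, measureReal_def]

lemma measureReal_preimage_diff_IU_le (B : Set ℝ) :
    S.mes.real (S.G ⁻¹' B \ S.IU) ≤ (1 - S.lam) * S.mes.real B := by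
  set mid := ⋃ i ∈ Finset.range (S.kI - 1), S.Jmid i ∩ S.G ⁻¹' B
  have hcover : (S.G ⁻¹' B \ S.IU) ∩ Icc 0 1 ⊆
      (S.Jleft ∩ S.G ⁻¹' B ∪ S.Jright ∩ S.G ⁻¹' B) ∪ mid := by
    rintro x ⟨⟨hB, hIU⟩, hx⟩
    rcases S.mem_IU_or_gap hx with h | h | h | ⟨i, hi, h⟩
    · exact absurd h hIU
    · exact Or.inl (Or.inl ⟨h, hB⟩)
    · exact Or.inl (Or.inr ⟨h, hB⟩)
    · exact Or.inr (mem_biUnion (Finset.mem_range.mpr (by omega)) ⟨h, hB⟩)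
  have hmid : S.mes.real mid ≤ (∑ i ∈ Finset.range (S.kI - 1),
      (S.a (2 * i + 2) - S.a (2 * i + 1))) * S.mes.real B := by
    refine (measureReal_biUnion_finset_le _ _).trans ?_
    rw [Finset.sum_mul]
    refine Finset.sum_le_sum fun i hi => ?_
    have hi : i + 1 < S.kI := by have := Finset.mem_range.mp hi; omega
    exact S.measureReal_inter_preimage_le (S.isAffinePiece_Jmid hi) (S.Jmid_subset_Icc hi)
      (sub_nonneg.mpr (S.a_le_a (by omega) (by omega))) B
  have hleft := S.measureReal_inter_preimage_le S.isAffinePiece_Jleft S.Jleft_subset_Icc S.ha0 B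
  have hright := S.measureReal_inter_preimage_le S.isAffinePiece_Jright S.Jright_subset_Icc
    (sub_nonneg.mpr S.ha1) B
  have hgaps : 1 - S.lam = S.a 0 + (1 - S.a (2 * S.kI - 1)) +
      ∑ i ∈ Finset.range (S.kI - 1), (S.a (2 * i + 2) - S.a (2 * i + 1)) := by
    linarith [S.lam_add_gaps]
  rw [← measureReal_inter_Icc]
  calc _ ≤ S.mes.real ((S.Jleft ∩ S.G ⁻¹' B ∪ S.Jright ∩ S.G ⁻¹' B) ∪ mid) :=
        measureReal_mono hcover
    _ ≤ S.mes.real (S.Jleft ∩ S.G ⁻¹' B) + S.mes.real (S.Jright ∩ S.G ⁻¹' B) +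
        S.mes.real mid :=
        (measureReal_union_le _ _).trans (add_le_add_left (measureReal_union_le _ _) _)
    _ ≤ _ := add_le_add (add_le_add hleft hright) hmid
    _ = (1 - S.lam) * S.mes.real B := by rw [hgaps]; ring

lemma measurableSet_Icc_inter_preimage {B : Set ℝ} (hB : MeasurableSet B) :
    MeasurableSet (Icc 0 1 ∩ S.G ⁻¹' B) := by
  have hset : Icc 0 1 ∩ S.G ⁻¹' B = ⋃ P ∈ S.PieceFamily, P ∩ S.G ⁻¹' B := by
    ext x
    simp only [mem_inter_iff, mem_iUnion, exists_prop]
    refine ⟨fun ⟨hx, hGx⟩ => ?_,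
      fun ⟨P, hP, hx, hGx⟩ => ⟨S.subset_Icc_of_mem_pieceFamily hP hx, hGx⟩⟩
    obtain ⟨P, hP, hxP⟩ := S.Icc_subset_sUnion_pieceFamily hx
    exact ⟨P, hP, hxP, hGx⟩
  rw [hset]
  refine S.pieceFamily_finite.measurableSet_biUnion fun P hP => ?_
  obtain ⟨L, hL⟩ := S.exists_isAffinePiece_of_mem_pieceFamily hP
  exact S.measurableSet_inter_preimage hL (S.measurableSet_of_mem_pieceFamily hP) hB

lemma measurableSet_Icc_inter_preimage_iterate {B : Set ℝ} (hB : MeasurableSet B) (k : ℕ) :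
    MeasurableSet (Icc 0 1 ∩ S.G^[k] ⁻¹' B) := by
  induction k with
  | zero => exact measurableSet_Icc.inter hB
  | succ k ih =>
    convert S.measurableSet_Icc_inter_preimage ih using 1
    ext x
    simp only [mem_inter_iff, mem_preimage, Function.iterate_succ_apply]
    exact ⟨fun ⟨hx, h⟩ => ⟨hx, S.hGmaps hx, h⟩, fun ⟨hx, _, h⟩ => ⟨hx, h⟩⟩

/-! ### The coding map `ψ` -/

lemma summable_psi_term (z : ℝ) :
    Summable fun i : ℕ => if S.G^[i] z ∈ S.IU then (0 : ℝ) else 2⁻¹ ^ (i + 1) := by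
  refine summable_two_inv_pow_succ.of_nonneg_of_le (fun i => by split_ifs <;> positivity)
    (fun i => by split_ifs <;> [positivity; exact le_rfl])

lemma psi_eq (z : ℝ) : S.psi z = (if z ∈ S.IU then 0 else 2⁻¹) + 2⁻¹ * S.psi (S.G z) := by
  rw [psi, (S.summable_psi_term z).tsum_eq_zero_add, psi, ← tsum_mul_left]
  congr 1
  · simp
  · exact tsum_congr fun i => by rw [Function.iterate_succ_apply]; split_ifs <;> ring

lemma psi_eq_of_mem_IU {z : ℝ} (h : z ∈ S.IU) : S.psi z = 2⁻¹ * S.psi (S.G z) := by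
  rw [psi_eq, if_pos h, zero_add]

lemma psi_eq_of_notMem_IU {z : ℝ} (h : z ∉ S.IU) : S.psi z = 2⁻¹ + 2⁻¹ * S.psi (S.G z) := by
  rw [psi_eq, if_neg h]

lemma psi_nonneg (z : ℝ) : 0 ≤ S.psi z :=
  tsum_nonneg fun i => by split_ifs <;> positivity

lemma psi_le_one (z : ℝ) : S.psi z ≤ 1 := by
  rw [psi, ← tsum_two_inv_pow_succ]
  exact (S.summable_psi_term z).tsum_le_tsum (fun i => by split_ifs <;> [positivity; exact le_rfl])
    summable_two_inv_pow_succ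

lemma abs_psi_sub_psi_le {z z' : ℝ} {d : ℕ}
    (h : ∀ i < d, (S.G^[i] z ∈ S.IU ↔ S.G^[i] z' ∈ S.IU)) :
    |S.psi z - S.psi z'| ≤ 2⁻¹ ^ d := by
  induction d generalizing z z' with
  | zero =>
    rw [pow_zero, abs_sub_le_iff]
    constructor <;> linarith [S.psi_nonneg z, S.psi_nonneg z', S.psi_le_one z, S.psi_le_one z']
  | succ d ih =>
    have h0 : z ∈ S.IU ↔ z' ∈ S.IU := h 0 d.succ_pos
    have hG := ih fun i hi => by simpa only [Function.iterate_succ_apply] using h (i + 1) (by omega)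
    rw [S.psi_eq z, S.psi_eq z', h0, add_sub_add_left_eq_sub, ← mul_sub, abs_mul, pow_succ',
      abs_of_pos (by norm_num : (0 : ℝ) < 2⁻¹)]
    gcongr

lemma iterate_mem_IU_of_psi_lt {z : ℝ} {m : ℕ} (h : S.psi z < 2⁻¹ ^ m) {i : ℕ} (hi : i < m) :
    S.G^[i] z ∈ S.IU := by
  induction m generalizing z i with
  | zero => omega
  | succ m ih =>
    have hz : z ∈ S.IU := by
      by_contra hz
      rw [S.psi_eq_of_notMem_IU hz] at h
      linarith [S.psi_nonneg (S.G z), two_inv_pow_succ_le m]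
    rcases i with _ | i
    · exact hz
    rw [S.psi_eq_of_mem_IU hz, pow_succ'] at h
    exact ih (lt_of_mul_lt_mul_left h (by norm_num)) (by omega)

lemma psi_le_of_iterate_mem_IU {z : ℝ} {m : ℕ} (h : ∀ i < m, S.G^[i] z ∈ S.IU) :
    S.psi z ≤ 2⁻¹ ^ m := by
  induction m generalizing z with
  | zero => simpa using S.psi_le_one z
  | succ m ih =>
    rw [S.psi_eq_of_mem_IU (z := z) (h 0 m.succ_pos), pow_succ']
    gcongr
    exact ih fun i hi => by simpa only [Function.iterate_succ_apply] using h (i + 1) (by omega)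

-- Nothing is assumed about `G` off `[0, 1]`, so `ψ` is only measurable on `[0, 1]`.
lemma aemeasurable_psi : AEMeasurable S.psi S.mes := by
  refine ⟨fun z => ∑' i : ℕ, if z ∈ Icc 0 1 ∩ S.G^[i] ⁻¹' S.IU then (0 : ℝ) else 2⁻¹ ^ (i + 1),
    Measurable.tsum fun i => Measurable.ite
      (S.measurableSet_Icc_inter_preimage_iterate S.measurableSet_IU i) measurable_const
      measurable_const, ?_⟩
  filter_upwards [(ae_restrict_mem measurableSet_Icc : ∀ᵐ z ∂S.mes, z ∈ Icc (0 : ℝ) 1)] with z hz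
  exact tsum_congr fun i => by simp only [mem_inter_iff, hz, true_and, mem_preimage]

/-! ### The distribution of `ψ` -/

noncomputable def psiMass (x y : ℝ) : ℝ := S.mes.real {z | x ≤ S.psi z ∧ S.psi z ≤ y}

noncomputable def theta : ℝ := max S.lam (1 - S.lam)

lemma theta_lt_one : S.theta < 1 := max_lt S.lam_lt_one (by linarith [S.lam_pos])

lemma lam_le_theta : S.lam ≤ S.theta := le_max_left _ _

lemma one_sub_lam_le_theta : 1 - S.lam ≤ S.theta := le_max_right _ _

lemma theta_pos : 0 < S.theta := S.lam_pos.trans_le S.lam_le_theta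

lemma psiMass_nonneg (x y : ℝ) : 0 ≤ S.psiMass x y := measureReal_nonneg

lemma psiMass_le_one (x y : ℝ) : S.psiMass x y ≤ 1 := measureReal_le_one

lemma psiMass_le_psiMass_add (x m y : ℝ) : S.psiMass x y ≤ S.psiMass x m + S.psiMass m y := by
  refine (measureReal_mono fun z (hz : x ≤ S.psi z ∧ S.psi z ≤ y) => ?_).trans
    (measureReal_union_le _ _)
  rcases le_total (S.psi z) m with h | h
  exacts [Or.inl ⟨hz.1, h⟩, Or.inr ⟨h, hz.2⟩]

lemma psiMass_of_neg {x y : ℝ} (hy : y < 0) : S.psiMass x y = 0 := by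
  have hempty : {z | x ≤ S.psi z ∧ S.psi z ≤ y} = (∅ : Set ℝ) :=
    eq_empty_of_forall_notMem fun z hz => (hz.2.trans_lt hy).not_ge (S.psi_nonneg z)
  rw [psiMass, hempty, measureReal_empty]

lemma psiMass_of_one_lt {x y : ℝ} (hx : 1 < x) : S.psiMass x y = 0 := by
  have hempty : {z | x ≤ S.psi z ∧ S.psi z ≤ y} = (∅ : Set ℝ) :=
    eq_empty_of_forall_notMem fun z hz => (hx.trans_le hz.1).not_ge (S.psi_le_one z)
  rw [psiMass, hempty, measureReal_empty]

lemma psiMass_le_selfSimilar (x y : ℝ) : S.psiMass x y ≤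
    S.lam * S.psiMass (2 * x) (2 * y) + (1 - S.lam) * S.psiMass (2 * x - 1) (2 * y - 1) := by
  have hsub : {z | x ≤ S.psi z ∧ S.psi z ≤ y} ⊆
      S.IU ∩ S.G ⁻¹' {z | 2 * x ≤ S.psi z ∧ S.psi z ≤ 2 * y} ∪
        S.G ⁻¹' {z | 2 * x - 1 ≤ S.psi z ∧ S.psi z ≤ 2 * y - 1} \ S.IU := by
    rintro z ⟨hx, hy⟩
    by_cases hz : z ∈ S.IU
    · rw [S.psi_eq_of_mem_IU hz] at hx hy
      exact Or.inl ⟨hz, by linarith, by linarith⟩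
    · rw [S.psi_eq_of_notMem_IU hz] at hx hy
      exact Or.inr ⟨⟨by linarith, by linarith⟩, hz⟩
  refine (measureReal_mono hsub).trans ((measureReal_union_le _ _).trans (add_le_add ?_ ?_))
  exacts [(S.measureReal_IU_inter_preimage _).le, S.measureReal_preimage_diff_IU_le _]

lemma lam_mul_psiMass_le (x y : ℝ) : S.lam * S.psiMass (2 * x) (2 * y) ≤ S.psiMass x y := by
  refine (S.measureReal_IU_inter_preimage _).symm.le.trans (measureReal_mono ?_)
  rintro z ⟨hz, hx, hy⟩
  change x ≤ S.psi z ∧ S.psi z ≤ y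
  rw [S.psi_eq_of_mem_IU hz]
  constructor <;> linarith

lemma psiMass_zero_zero : S.psiMass 0 0 = 0 := by
  have h := S.psiMass_le_selfSimilar 0 0
  rw [S.psiMass_of_neg (by norm_num : (2 : ℝ) * 0 - 1 < 0)] at h
  simp only [mul_zero, add_zero] at h
  nlinarith [S.psiMass_nonneg 0 0, S.lam_lt_one]

lemma psiMass_one_one : S.psiMass 1 1 = 0 := by
  have h := S.psiMass_le_selfSimilar 1 1
  rw [S.psiMass_of_one_lt (by norm_num : (1 : ℝ) < 2 * 1)] at h
  norm_num at h
  nlinarith [S.psiMass_nonneg 1 1, S.lam_pos]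

lemma psiMass_of_nonpos {x y : ℝ} (hy : y ≤ 0) : S.psiMass x y = 0 :=
  le_antisymm ((measureReal_mono fun z (hz : x ≤ S.psi z ∧ S.psi z ≤ y) =>
    show 0 ≤ S.psi z ∧ S.psi z ≤ 0 from ⟨S.psi_nonneg z, hz.2.trans hy⟩).trans_eq
    S.psiMass_zero_zero) (S.psiMass_nonneg x y)

lemma psiMass_of_one_le {x y : ℝ} (hx : 1 ≤ x) : S.psiMass x y = 0 :=
  le_antisymm ((measureReal_mono fun z (hz : x ≤ S.psi z ∧ S.psi z ≤ y) =>
    show 1 ≤ S.psi z ∧ S.psi z ≤ 1 from ⟨hx.trans hz.1, S.psi_le_one z⟩).trans_eq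
    S.psiMass_one_one) (S.psiMass_nonneg x y)

lemma psiMass_le_of_le_half {x y : ℝ} (hy : y ≤ 2⁻¹) :
    S.psiMass x y ≤ S.lam * S.psiMass (2 * x) (2 * y) := by
  simpa [S.psiMass_of_nonpos (by linarith : 2 * y - 1 ≤ 0)] using S.psiMass_le_selfSimilar x y

lemma psiMass_le_of_half_le {x y : ℝ} (hx : 2⁻¹ ≤ x) :
    S.psiMass x y ≤ (1 - S.lam) * S.psiMass (2 * x - 1) (2 * y - 1) := by
  simpa [S.psiMass_of_one_le (by linarith : 1 ≤ 2 * x)] using S.psiMass_le_selfSimilar x y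

lemma psiMass_zero_two_inv_pow_le (d : ℕ) : S.psiMass 0 (2⁻¹ ^ d) ≤ S.lam ^ d := by
  induction d with
  | zero => simpa using S.psiMass_le_one 0 1
  | succ d ih =>
    have h := S.psiMass_le_of_le_half (x := 0) (two_inv_pow_succ_le d)
    rw [mul_zero, show (2 : ℝ) * 2⁻¹ ^ (d + 1) = 2⁻¹ ^ d by ring] at h
    rw [pow_succ' S.lam]
    exact h.trans (mul_le_mul_of_nonneg_left ih S.lam_pos.le)

lemma psiMass_one_sub_two_inv_pow_le (d : ℕ) :
    S.psiMass (1 - 2⁻¹ ^ d) 1 ≤ (1 - S.lam) ^ d := by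
  induction d with
  | zero => simpa using S.psiMass_le_one 0 1
  | succ d ih =>
    have h := S.psiMass_le_of_half_le (y := 1) (by linarith [two_inv_pow_succ_le d] :
      2⁻¹ ≤ 1 - (2⁻¹ : ℝ) ^ (d + 1))
    rw [show (2 : ℝ) * (1 - 2⁻¹ ^ (d + 1)) - 1 = 1 - 2⁻¹ ^ d by ring,
      show (2 : ℝ) * 1 - 1 = 1 by norm_num] at h
    rw [pow_succ' (1 - S.lam)]
    exact h.trans (mul_le_mul_of_nonneg_left ih (by linarith [S.lam_lt_one]))

lemma psiMass_le_two_mul_theta_pow (d : ℕ) {x y : ℝ} (h : y - x ≤ 2⁻¹ ^ d) :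
    S.psiMass x y ≤ 2 * S.theta ^ d := by
  have hlam := S.lam_le_theta
  have hlam' := S.one_sub_lam_le_theta
  have hθ := S.theta_pos
  induction d generalizing x y with
  | zero => linarith [S.psiMass_le_one x y, pow_zero S.theta]
  | succ d ih =>
    have h2 : 2 * y - 2 * x ≤ 2⁻¹ ^ d := by rw [pow_succ] at h; linarith
    rw [pow_succ']
    rcases le_or_gt y 2⁻¹ with hy | hy
    · calc S.psiMass x y ≤ S.lam * (2 * S.theta ^ d) :=
            (S.psiMass_le_of_le_half hy).trans (by gcongr; exacts [S.lam_pos.le, ih h2])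
        _ ≤ 2 * (S.theta * S.theta ^ d) := by nlinarith [pow_pos hθ d]
    rcases le_or_gt 2⁻¹ x with hx | hx
    · calc S.psiMass x y ≤ (1 - S.lam) * (2 * S.theta ^ d) :=
            (S.psiMass_le_of_half_le hx).trans (by
              gcongr; exacts [by linarith [S.lam_lt_one], ih (by linarith)])
        _ ≤ 2 * (S.theta * S.theta ^ d) := by nlinarith [pow_pos hθ d]
    -- `[x, y]` straddles `1/2`: both halves are near an end of `[0, 1]` after rescaling
    have hleft : S.psiMass x 2⁻¹ ≤ S.lam * (1 - S.lam) ^ d := by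
      refine (S.psiMass_le_of_le_half le_rfl).trans (mul_le_mul_of_nonneg_left ?_ S.lam_pos.le)
      refine le_trans ?_ (S.psiMass_one_sub_two_inv_pow_le d)
      rw [show (2 : ℝ) * 2⁻¹ = 1 by norm_num]
      exact measureReal_mono fun z (hz : 2 * x ≤ S.psi z ∧ S.psi z ≤ 1) =>
        show 1 - 2⁻¹ ^ d ≤ S.psi z ∧ S.psi z ≤ 1 from ⟨by linarith [hz.1], hz.2⟩
    have hright : S.psiMass 2⁻¹ y ≤ (1 - S.lam) * S.lam ^ d := by
      refine (S.psiMass_le_of_half_le le_rfl).trans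
        (mul_le_mul_of_nonneg_left ?_ (by linarith [S.lam_lt_one]))
      refine le_trans ?_ (S.psiMass_zero_two_inv_pow_le d)
      rw [show (2 : ℝ) * 2⁻¹ - 1 = 0 by norm_num]
      exact measureReal_mono fun z (hz : 0 ≤ S.psi z ∧ S.psi z ≤ 2 * y - 1) =>
        show 0 ≤ S.psi z ∧ S.psi z ≤ 2⁻¹ ^ d from ⟨hz.1, by linarith [hz.2]⟩
    have hpos : 0 ≤ 1 - S.lam := by linarith [S.lam_lt_one]
    have h1 : S.lam * (1 - S.lam) ^ d ≤ S.theta * S.theta ^ d :=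
      mul_le_mul hlam (pow_le_pow_left₀ hpos hlam' d) (pow_nonneg hpos d) hθ.le
    have h2 : (1 - S.lam) * S.lam ^ d ≤ S.theta * S.theta ^ d :=
      mul_le_mul hlam' (pow_le_pow_left₀ S.lam_pos.le hlam d) (pow_nonneg S.lam_pos.le d) hθ.le
    linarith [S.psiMass_le_psiMass_add x 2⁻¹ y]

lemma psiMass_le_lam_pow_mul (m : ℕ) {x y : ℝ} (hy : y ≤ 2⁻¹ ^ m) :
    S.psiMass x y ≤ S.lam ^ m * S.psiMass (2 ^ m * x) (2 ^ m * y) := by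
  induction m generalizing x y with
  | zero => simp
  | succ m ih =>
    have h := S.psiMass_le_of_le_half (x := x) (hy.trans (two_inv_pow_succ_le m))
    have h' := ih (x := 2 * x) (y := 2 * y) (by rw [pow_succ] at hy; linarith)
    rw [← mul_assoc, ← mul_assoc, ← pow_succ] at h'
    rw [pow_succ']
    exact h.trans (by rw [mul_assoc]; exact mul_le_mul_of_nonneg_left h' S.lam_pos.le)

lemma psiMass_le_lam_pow_mul_theta_pow {m d : ℕ} (hmd : m ≤ d) {x y : ℝ} (hxy : y - x ≤ 2⁻¹ ^ d)
    (hy : y ≤ 2⁻¹ ^ m) : S.psiMass x y ≤ 2 * S.lam ^ m * S.theta ^ (d - m) := by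
  obtain ⟨k, rfl⟩ := Nat.exists_eq_add_of_le hmd
  have hscaled : 2 ^ m * y - 2 ^ m * x ≤ 2⁻¹ ^ k := by
    have : (2 : ℝ) ^ m * 2⁻¹ ^ (m + k) = 2⁻¹ ^ k := by
      rw [pow_add, ← mul_assoc, ← mul_pow, mul_inv_cancel₀ two_ne_zero, one_pow, one_mul]
    rw [← mul_sub, ← this]
    exact mul_le_mul_of_nonneg_left hxy (by positivity)
  rw [Nat.add_sub_cancel_left, mul_assoc, mul_left_comm]
  exact (S.psiMass_le_lam_pow_mul m hy).trans
    (mul_le_mul_of_nonneg_left (S.psiMass_le_two_mul_theta_pow k hscaled)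
      (pow_nonneg S.lam_pos.le m))

lemma F_eq_psiMass (t : ℝ) : S.F t = S.psiMass 0 t := by
  have hset : {z | S.psi z ≤ t} = {z | 0 ≤ S.psi z ∧ S.psi z ≤ t} := by
    ext z
    exact (and_iff_right (S.psi_nonneg z)).symm
  rw [F, psiMass, ← hset, measureReal_def]

lemma F_mono : Monotone S.F := fun _ _ hst =>
  measureReal_mono fun z (hz : S.psi z ≤ _) => show S.psi z ≤ _ from hz.trans hst

lemma F_nonneg (t : ℝ) : 0 ≤ S.F t := measureReal_nonneg

lemma F_zero : S.F 0 = 0 := by rw [F_eq_psiMass, psiMass_zero_zero]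

lemma F_one : S.F 1 = 1 := by
  rw [F, ← measureReal_def, show {x | S.psi x ≤ 1} = univ from eq_univ_of_forall S.psi_le_one,
    probReal_univ]

lemma F_le_F_add_psiMass (x y : ℝ) : S.F y ≤ S.F x + S.psiMass x y := by
  refine (measureReal_mono fun z (hz : S.psi z ≤ y) => ?_).trans (measureReal_union_le _ _)
  rcases le_total (S.psi z) x with h | h
  exacts [Or.inl h, Or.inr ⟨h, hz⟩]

lemma continuous_F : Continuous S.F := by
  have hbound : ∀ d : ℕ, ∀ x y, x ≤ y → y - x ≤ 2⁻¹ ^ d → S.F y - S.F x ≤ 2 * S.theta ^ d :=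
    fun d x y _ h => by linarith [S.F_le_F_add_psiMass x y, S.psiMass_le_two_mul_theta_pow d h]
  rw [Metric.continuous_iff]
  intro x ε hε
  obtain ⟨d, hd⟩ := exists_pow_lt_of_lt_one (half_pos hε) S.theta_lt_one
  refine ⟨2⁻¹ ^ d, by positivity, fun y hy => ?_⟩
  rw [Real.dist_eq, abs_lt] at hy ⊢
  rcases le_total x y with h | h
  · have := hbound d x y h (by linarith)
    constructor <;> linarith [S.F_mono h]
  · have := hbound d y x h (by linarith)
    constructor <;> linarith [S.F_mono h]

lemma F_two_inv_mul {t : ℝ} (ht : t ≤ 1) : S.F (2⁻¹ * t) = S.lam * S.F t := by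
  have h2 : (2 : ℝ) * (2⁻¹ * t) = t := by ring
  have hle := S.psiMass_le_of_le_half (x := 0) (by linarith : 2⁻¹ * t ≤ 2⁻¹)
  have hge := S.lam_mul_psiMass_le 0 (2⁻¹ * t)
  rw [mul_zero, h2] at hle hge
  rw [F_eq_psiMass, F_eq_psiMass]
  exact le_antisymm hle hge

lemma F_two_inv_pow (m : ℕ) : S.F (2⁻¹ ^ m) = S.lam ^ m := by
  induction m with
  | zero => simpa using S.F_one
  | succ m ih =>
    rw [pow_succ', S.F_two_inv_mul (pow_le_one₀ (by norm_num) (by norm_num)), ih, pow_succ']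

lemma F_psi_eq_of_mem_IU {z : ℝ} (hz : z ∈ S.IU) : S.F (S.psi z) = S.lam * S.F (S.psi (S.G z)) := by
  rw [S.psi_eq_of_mem_IU hz, S.F_two_inv_mul (S.psi_le_one _)]

lemma lam_le_F_psi_of_notMem_IU {z : ℝ} (hz : z ∉ S.IU) : S.lam ≤ S.F (S.psi z) := by
  have hF : S.F 2⁻¹ = S.lam := by simpa using S.F_two_inv_pow 1
  rw [← hF]
  exact S.F_mono (by rw [S.psi_eq_of_notMem_IU hz]; linarith [S.psi_nonneg (S.G z)])

lemma exists_F_eq {c : ℝ} (hc : c ∈ Icc (0 : ℝ) 1) : ∃ t, S.F t = c := by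
  obtain ⟨t, -, ht⟩ := intermediate_value_Icc zero_le_one S.continuous_F.continuousOn
    (by rwa [F_zero, F_one])
  exact ⟨t, ht⟩

lemma F_le_one (t : ℝ) : S.F t ≤ 1 := measureReal_le_one

lemma nullMeasurableSet_F_psi_lt (c : ℝ) : NullMeasurableSet {z | S.F (S.psi z) < c} S.mes :=
  (S.F_mono.measurable.comp_aemeasurable S.aemeasurable_psi).nullMeasurable measurableSet_Iio

lemma measureReal_F_psi_lt_of_mem_Icc {c : ℝ} (hc : c ∈ Icc (0 : ℝ) 1) :
    S.mes.real {z | S.F (S.psi z) < c} = c := by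
  obtain ⟨t, rfl⟩ := S.exists_F_eq hc
  refine le_antisymm (measureReal_mono fun z (hz : S.F (S.psi z) < S.F t) =>
    show S.psi z ≤ t from le_of_not_gt fun h => hz.not_ge (S.F_mono h.le)) ?_
  refine le_of_forall_lt_imp_le_of_dense fun c' hc' => ?_
  rcases lt_or_ge c' 0 with h0 | h0
  · exact h0.le.trans measureReal_nonneg
  obtain ⟨t', rfl⟩ := S.exists_F_eq ⟨h0, hc'.le.trans hc.2⟩
  exact measureReal_mono fun z (hz : S.psi z ≤ t') =>
    show S.F (S.psi z) < S.F t from (S.F_mono hz).trans_lt hc'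

lemma measureReal_F_psi_lt (c : ℝ) :
    S.mes.real {z | S.F (S.psi z) < c} = max 0 (min c 1) := by
  rcases le_or_gt c 0 with h0 | h0
  · have hempty : {z | S.F (S.psi z) < c} = (∅ : Set ℝ) :=
      eq_empty_of_forall_notMem fun z hz => (h0.trans (S.F_nonneg _)).not_gt hz
    rw [hempty, measureReal_empty, max_eq_left (min_le_of_left_le h0)]
  rcases le_or_gt c 1 with h1 | h1
  · rw [S.measureReal_F_psi_lt_of_mem_Icc ⟨h0.le, h1⟩, min_eq_left h1, max_eq_right h0.le]
  · have huniv : {z | S.F (S.psi z) < c} = univ :=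
      eq_univ_of_forall fun z => (S.F_le_one _).trans_lt h1
    rw [huniv, probReal_univ, min_eq_right h1.le, max_eq_right zero_le_one]

lemma measureReal_F_psi_mem_Ico {c e : ℝ} (hce : c ≤ e) :
    S.mes.real {z | S.F (S.psi z) ∈ Ico c e} = max 0 (min e 1) - max 0 (min c 1) := by
  have h := measureReal_inter_add_sdiff₀ (s := {z | S.F (S.psi z) < e})
    (S.nullMeasurableSet_F_psi_lt c)
  have hsub : {z | S.F (S.psi z) < c} ⊆ {z | S.F (S.psi z) < e} := fun z hz =>
    lt_of_lt_of_le hz hce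
  rw [inter_eq_right.mpr hsub, S.measureReal_F_psi_lt, S.measureReal_F_psi_lt] at h
  have hset :
      {z | S.F (S.psi z) < e} \ {z | S.F (S.psi z) < c} = {z | S.F (S.psi z) ∈ Ico c e} := by
    ext z
    exact ⟨fun ⟨he, hc⟩ => ⟨not_lt.mp hc, he⟩, fun ⟨hc, he⟩ => ⟨he, not_lt.mpr hc⟩⟩
  rw [← hset]
  linarith

lemma measureReal_F_psi_mem_Ico_of_le {c e : ℝ} (hc : 0 ≤ c) (hce : c ≤ e) (he : e ≤ 1) :
    S.mes.real {z | S.F (S.psi z) ∈ Ico c e} = e - c := by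
  rw [S.measureReal_F_psi_mem_Ico hce, min_eq_left he, min_eq_left (hce.trans he),
    max_eq_right (hc.trans hce), max_eq_right hc]

lemma measureReal_F_psi_mem_Ico_le {c e : ℝ} (hce : c ≤ e) :
    S.mes.real {z | S.F (S.psi z) ∈ Ico c e} ≤ e - c := by
  rw [S.measureReal_F_psi_mem_Ico hce]
  simp only [max_def, min_def]
  split_ifs <;> linarith

lemma F_sub_F_le {m d : ℕ} (hmd : m ≤ d) {x y : ℝ} (hxy : y - x ≤ 2⁻¹ ^ d)
    (hy : y ≤ 2⁻¹ ^ m) : S.F y - S.F x ≤ 2 * S.lam ^ m * S.theta ^ (d - m) := by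
  linarith [S.F_le_F_add_psiMass x y, S.psiMass_le_lam_pow_mul_theta_pow hmd hxy hy]

lemma abs_F_sub_F_le {m d : ℕ} (hmd : m ≤ d) {x y : ℝ} (hxy : |x - y| ≤ 2⁻¹ ^ d)
    (hx : x ≤ 2⁻¹ ^ m) (hy : y ≤ 2⁻¹ ^ m) :
    |S.F x - S.F y| ≤ 2 * S.lam ^ m * S.theta ^ (d - m) := by
  rw [abs_le] at hxy ⊢
  constructor
  · linarith [S.F_sub_F_le hmd (by linarith : y - x ≤ 2⁻¹ ^ d) hy]
  · linarith [S.F_sub_F_le hmd (by linarith : x - y ≤ 2⁻¹ ^ d) hx]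

/-! ### Exceedance sets and cylinders -/

lemma Un_eq {α τ : ℝ} (hα : 0 < α) (hτ : 0 < τ) {n : ℕ} (hn : n ≠ 0) :
    S.Un α τ n = {z ∈ Icc 0 1 | S.F (S.psi z) < τ / n} := by
  ext z
  refine and_congr_right fun _ => ?_
  rw [X, phi, un, Function.iterate_zero_apply, ofReal_rpow_lt_ofReal_rpow_neg_iff (by positivity)
    (by positivity) (S.F_nonneg _), inv_div]

lemma UnPair1_eq {α τ' τ'' : ℝ} (hα : 0 < α) (h1 : 0 < τ'') (h2 : τ'' < τ') {n : ℕ} (hn : n ≠ 0)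
    (hlam : τ' / n ≤ S.lam) :
    S.UnPair1 α τ' τ'' n =
      {z ∈ Icc 0 1 | S.F (S.psi z) ∈ Ico (max τ'' (S.lam * τ') / n) (τ' / n)} := by
  have hn' : (0 : ℝ) < n := by positivity
  have hU : S.UnPair α τ' τ'' n = {z ∈ Icc 0 1 | S.F (S.psi z) ∈ Ico (τ'' / n) (τ' / n)} := by
    ext z
    rw [UnPair, S.Un_eq hα (h1.trans h2) hn, S.Un_eq hα h1 hn, Set.mem_sdiff]
    exact ⟨fun ⟨⟨hz, hlt⟩, hnot⟩ => ⟨hz, le_of_not_gt fun h => hnot ⟨hz, h⟩, hlt⟩,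
      fun ⟨hz, hge, hlt⟩ => ⟨⟨hz, hlt⟩, fun ⟨_, h⟩ => h.not_ge hge⟩⟩
  have hIU : ∀ z, S.F (S.psi z) < τ' / n → z ∈ S.IU := fun z hz => by
    by_contra h
    exact (hz.trans_le hlam).not_ge (S.lam_le_F_psi_of_notMem_IU h)
  rw [UnPair1, hU, ← max_div_div_right hn'.le, mul_div_assoc]
  ext z
  simp only [mem_inter_iff, mem_preimage, Set.mem_sdiff, mem_Ico, max_le_iff]
  constructor
  · rintro ⟨⟨hz, hlo, hhi⟩, hGz, hGnot⟩
    have hshift := S.F_psi_eq_of_mem_IU (hIU z hhi)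
    refine ⟨hz, ⟨hlo, le_of_not_gt fun hlt => hGnot ⟨hGz, ?_, ?_⟩⟩, hhi⟩
    · nlinarith [S.lam_lt_one, S.F_nonneg (S.psi (S.G z))]
    · rw [hshift] at hlt
      exact lt_of_mul_lt_mul_left hlt S.lam_pos.le
  · rintro ⟨hz, ⟨hlo, hlo'⟩, hhi⟩
    have hshift := S.F_psi_eq_of_mem_IU (hIU z hhi)
    refine ⟨⟨hz, hlo, hhi⟩, S.hGmaps hz, fun ⟨_, _, hGlt⟩ => ?_⟩
    rw [hshift] at hlo'
    exact (mul_lt_mul_of_pos_left hGlt S.lam_pos).not_ge hlo'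

lemma mem_Cyl {d : ℕ} {w : ℕ → Set ℝ} {z : ℝ} : z ∈ S.Cyl d w ↔ ∀ k < d, S.G^[k] z ∈ w k := by
  simp [Cyl]

lemma Cyl_subset_Icc {d : ℕ} {w : ℕ → Set ℝ} (hd : d ≠ 0) (hw : ∀ k < d, w k ∈ S.PieceFamily) :
    S.Cyl d w ⊆ Icc 0 1 := fun _ hz =>
  S.subset_Icc_of_mem_pieceFamily (hw 0 (Nat.pos_of_ne_zero hd))
    (S.mem_Cyl.mp hz 0 (Nat.pos_of_ne_zero hd))

lemma iterate_mem_IU_iff_of_mem_Cyl {d : ℕ} {w : ℕ → Set ℝ} (hw : ∀ k < d, w k ∈ S.PieceFamily)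
    {z z' : ℝ} (hz : z ∈ S.Cyl d w) (hz' : z' ∈ S.Cyl d w) {k : ℕ} (hk : k < d) :
    S.G^[k] z ∈ S.IU ↔ S.G^[k] z' ∈ S.IU := by
  have h := S.mem_Cyl.mp hz k hk
  have h' := S.mem_Cyl.mp hz' k hk
  rcases S.subset_IU_or_disjoint_of_mem_pieceFamily (hw k hk) with hsub | hdisj
  · exact iff_of_true (hsub h) (hsub h')
  · exact iff_of_false (hdisj.notMem_of_mem_left h) (hdisj.notMem_of_mem_left h')

-- `F (ψ x) < λ ^ m = F (2⁻¹ ^ m)` forces the first `m` symbols of the cylinder into `⋃ I`.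
lemma abs_F_psi_sub_le_of_mem_Cyl {m d : ℕ} (hmd : m ≤ d) {w : ℕ → Set ℝ}
    (hw : ∀ k < d, w k ∈ S.PieceFamily) {x z z' : ℝ} (hx : x ∈ S.Cyl d w)
    (hFx : S.F (S.psi x) < S.lam ^ m) (hz : z ∈ S.Cyl d w) (hz' : z' ∈ S.Cyl d w) :
    |S.F (S.psi z) - S.F (S.psi z')| ≤ 2 * S.lam ^ m * S.theta ^ (d - m) := by
  have hψx : S.psi x < 2⁻¹ ^ m := by
    rw [← S.F_two_inv_pow] at hFx
    exact lt_of_not_ge fun h => hFx.not_ge (S.F_mono h)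
  have hsmall : ∀ y ∈ S.Cyl d w, S.psi y ≤ 2⁻¹ ^ m := fun y hy =>
    S.psi_le_of_iterate_mem_IU fun i hi =>
      (S.iterate_mem_IU_iff_of_mem_Cyl hw hx hy (by omega)).mp (S.iterate_mem_IU_of_psi_lt hψx hi)
  exact S.abs_F_sub_F_le hmd
    (S.abs_psi_sub_psi_le fun i hi => S.iterate_mem_IU_iff_of_mem_Cyl hw hz hz' hi)
    (hsmall z hz) (hsmall z' hz')

lemma jn_spec {τ : ℝ} {n : ℕ} (h : 1 ≤ S.jn τ n) :
    S.lam ^ S.jn τ n ≤ τ / n ∧ τ / n < S.lam ^ (S.jn τ n - 1) := by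
  have hne : {j : ℕ | S.lam ^ j ≤ τ / n}.Nonempty := by
    by_contra hempty
    rw [not_nonempty_iff_eq_empty] at hempty
    simp [jn, hempty] at h
  exact ⟨Nat.sInf_mem hne, lt_of_not_ge (Nat.notMem_of_lt_sInf (Nat.sub_lt h one_pos))⟩

lemma tendsto_jn {τ : ℝ} (hτ : 0 < τ) : Tendsto (S.jn τ) atTop atTop := by
  refine tendsto_atTop.mpr fun J => ?_
  filter_upwards [tendsto_natCast_atTop_atTop.eventually_gt_atTop (τ / S.lam ^ J)] with n hn
  have hlamJ : 0 < S.lam ^ J := pow_pos S.lam_pos J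
  have hn' : (0 : ℝ) < n := (div_pos hτ hlamJ).trans hn
  have hlt : τ / n < S.lam ^ J := by rwa [div_lt_iff₀ hn', ← div_lt_iff₀' hlamJ]
  obtain ⟨j, hj⟩ := exists_pow_lt_of_lt_one (div_pos hτ hn') S.lam_lt_one
  refine le_of_not_gt fun hJ => ?_
  have hmem : S.lam ^ S.jn τ n ≤ τ / n := Nat.sInf_mem (s := {j : ℕ | S.lam ^ j ≤ τ / n}) ⟨j, hj.le⟩
  exact (hlt.trans_le (pow_le_pow_of_le_one S.lam_pos.le S.lam_lt_one.le hJ.le)).not_ge hmem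

lemma measureReal_UnPair1 {α τ' τ'' : ℝ} (hα : 0 < α) (h1 : 0 < τ'') (h2 : τ'' < τ') {n : ℕ}
    (hn : n ≠ 0) (hlam : τ' / n ≤ S.lam) :
    S.mes.real (S.UnPair1 α τ' τ'' n) = (τ' - max τ'' (S.lam * τ')) / n := by
  have hset : S.UnPair1 α τ' τ'' n =
      {z | S.F (S.psi z) ∈ Ico (max τ'' (S.lam * τ') / n) (τ' / n)} ∩ Icc 0 1 := by
    rw [S.UnPair1_eq hα h1 h2 hn hlam, inter_comm]
    rfl
  rw [hset, measureReal_inter_Icc, S.measureReal_F_psi_mem_Ico_of_le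
    (div_nonneg (h1.le.trans (le_max_left _ _)) n.cast_nonneg)
    (div_le_div_of_nonneg_right (max_le h2.le (by nlinarith [S.lam_lt_one])) n.cast_nonneg)
    (hlam.trans S.lam_lt_one.le), sub_div]

lemma GammaPlus_diff_GammaMinus_subset {α τ' τ'' : ℝ} (hα : 0 < α) (h1 : 0 < τ'') (h2 : τ'' < τ')
    {n m : ℕ} (hm : S.jn τ' n = m + 1) (hn : n ≠ 0) (hlam : τ' / n ≤ S.lam)
    (hlow : τ' / n < S.lam ^ m) :
    S.GammaPlus α τ' τ'' n \ S.GammaMinus α τ' τ'' n ⊆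
      {z | S.F (S.psi z) ∈ Ico (max τ'' (S.lam * τ') / n - 2 * S.lam ^ m * S.theta ^ (m + 2))
          (max τ'' (S.lam * τ') / n + 2 * S.lam ^ m * S.theta ^ (m + 2))} ∪
        {z | S.F (S.psi z) ∈ Ico (τ' / n - 2 * S.lam ^ m * S.theta ^ (m + 2))
          (τ' / n + 2 * S.lam ^ m * S.theta ^ (m + 2))} := by
  rintro z ⟨⟨C, ⟨⟨w, hw, rfl⟩, hmeet⟩, hzC⟩, hzm⟩
  have hnot : ¬ S.Cyl (2 * S.jn τ' n) w ⊆ S.UnPair1 α τ' τ'' n :=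
    fun h => hzm ⟨_, ⟨⟨w, hw, rfl⟩, h⟩, hzC⟩
  rw [S.UnPair1_eq hα h1 h2 hn hlam] at hmeet hnot
  rw [hm] at hw hmeet hnot hzC
  have hCyl := S.Cyl_subset_Icc (by omega) hw
  obtain ⟨x, hxC, -, hxF⟩ := hmeet
  refine subset_preimage_Ico_union_of_abs_sub_le hCyl ⟨x, hxC, hCyl hxC, hxF⟩ hnot
    (fun y hy y' hy' => ?_) hzC
  have := S.abs_F_psi_sub_le_of_mem_Cyl (by omega : m ≤ 2 * (m + 1)) hw hxC (hxF.2.trans hlow)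
    hy hy'
  rwa [show 2 * (m + 1) - m = m + 2 by omega] at this

lemma measureReal_GammaPlus_diff_GammaMinus_le {α τ' τ'' : ℝ} (hα : 0 < α) (h1 : 0 < τ'')
    (h2 : τ'' < τ') {n : ℕ} (hj : 2 ≤ S.jn τ' n) :
    S.mes.real (S.GammaPlus α τ' τ'' n \ S.GammaMinus α τ' τ'' n) ≤
      8 * τ' / (S.lam * (τ' - max τ'' (S.lam * τ'))) * S.theta ^ S.jn τ' n *
        S.mes.real (S.UnPair1 α τ' τ'' n) := by
  obtain ⟨hup, hlow⟩ := S.jn_spec (τ := τ') (n := n) (by omega)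
  obtain ⟨m, hm⟩ : ∃ m, S.jn τ' n = m + 1 := ⟨_, (Nat.succ_pred_eq_of_pos (by omega)).symm⟩
  rw [hm] at hup hlow ⊢
  rw [Nat.add_sub_cancel] at hlow
  have hlam := S.lam_pos
  have hθ := S.theta_pos
  have hτ' : 0 < τ' := h1.trans h2
  have hn : n ≠ 0 := by
    rintro rfl
    rw [Nat.cast_zero, div_zero] at hup
    exact (pow_pos hlam _).not_ge hup
  have hlamn : τ' / n ≤ S.lam :=
    hlow.le.trans (pow_le_of_le_one hlam.le S.lam_lt_one.le (by omega : m ≠ 0))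
  rw [S.measureReal_UnPair1 hα h1 h2 hn hlamn]
  have hβ : max τ'' (S.lam * τ') < τ' := max_lt h2 (by nlinarith [S.lam_lt_one])
  set β := max τ'' (S.lam * τ')
  set M := 2 * S.lam ^ m * S.theta ^ (m + 2)
  have hGamma : S.mes.real (S.GammaPlus α τ' τ'' n \ S.GammaMinus α τ' τ'' n) ≤ 4 * M := by
    refine (measureReal_mono (S.GammaPlus_diff_GammaMinus_subset hα h1 h2 hm hn hlamn hlow)).trans
      ((measureReal_union_le _ _).trans ?_)
    have hM : 0 ≤ M := by positivity
    linarith [S.measureReal_F_psi_mem_Ico_le (by linarith : β / n - M ≤ β / n + M),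
      S.measureReal_F_psi_mem_Ico_le (by linarith : τ' / n - M ≤ τ' / n + M)]
  have hlam_pow : S.lam ^ m ≤ τ' / n / S.lam := by
    rw [le_div_iff₀ hlam, ← pow_succ]
    exact hup
  have htheta : S.theta ^ (m + 2) ≤ S.theta ^ (m + 1) :=
    pow_le_pow_of_le_one hθ.le S.theta_lt_one.le (by omega)
  calc _ ≤ 4 * M := hGamma
    _ = 8 * S.lam ^ m * S.theta ^ (m + 2) := by ring
    _ ≤ 8 * (τ' / n / S.lam) * S.theta ^ (m + 1) := by gcongr
    _ = _ := by field_simp [(sub_pos.mpr hβ).ne']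

end CantorData

/-- paper's Lemma 4.5: there is a sequence `ρ_n → 0`, `ρ_n ≥ 0`, with
`𝔪(Γ_n^+ ∖ Γ_n^-) ≤ ρ_n 𝔪(U_n(τ',τ'')^{(1)})` for all large `n`. -/
theorem cylinder_approximation (S : CantorData) (α : ℝ)
    (hα : α ∈ Set.Ioo (0:ℝ) 2) (τ' τ'' : ℝ) (h1 : 0 < τ'') (h2 : τ'' < τ') :
    ∃ ρ : ℕ → ℝ, (∀ n, 0 ≤ ρ n) ∧ Filter.Tendsto ρ Filter.atTop (𝓝 0) ∧
      ∃ N : ℕ, ∀ n : ℕ, N ≤ n →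
        S.mes (S.GammaPlus α τ' τ'' n \ S.GammaMinus α τ' τ'' n) ≤
          ENNReal.ofReal (ρ n) * S.mes (S.UnPair1 α τ' τ'' n) := by
  have hτ' : 0 < τ' := h1.trans h2
  have hβ : max τ'' (S.lam * τ') < τ' := max_lt h2 (by nlinarith [S.lam_lt_one])
  set C := 8 * τ' / (S.lam * (τ' - max τ'' (S.lam * τ')))
  have hC : 0 ≤ C := div_nonneg (by positivity) (mul_nonneg S.lam_pos.le (by linarith))
  have hρ : ∀ n, 0 ≤ C * S.theta ^ S.jn τ' n := fun n => mul_nonneg hC (pow_nonneg S.theta_pos.le _)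
  refine ⟨fun n => C * S.theta ^ S.jn τ' n, hρ, ?_, ?_⟩
  · simpa using ((tendsto_pow_atTop_nhds_zero_of_lt_one S.theta_pos.le S.theta_lt_one).comp
      (S.tendsto_jn hτ')).const_mul C
  · obtain ⟨N, hN⟩ := eventually_atTop.mp ((S.tendsto_jn hτ').eventually_ge_atTop 2)
    refine ⟨N, fun n hn => ?_⟩
    rw [← ofReal_measureReal, ← ofReal_measureReal, ← ENNReal.ofReal_mul (hρ n)]
    exact ENNReal.ofReal_le_ofReal (S.measureReal_GammaPlus_diff_GammaMinus_le hα.1 h1 h2 (hN n hn))
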